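/- For four modes with k₁+k₂+k₃+k₄ = 0, the sum of the three pairings of perpendicular brackets reproduces the quartic vertex up to exact terms: B([ξ₁,ξ₂]^⊥, [ξ₃,ξ₄]^⊥) + B([ξ₃,ξ₁]^⊥, [ξ₂,ξ₄]^⊥) + B([ξ₁,ξ₄]^⊥, [ξ₂,ξ₃]^⊥) = −v₄ + (δ′v₃). -/

import Mathlib

/-!
Split each bracket into its transverse part `(ξ₁·ξ₂)(k₁ − k₂)` and its longitudinal part
`(ξ₁·k₁)ξ₂ − (ξ₂·k₂)ξ₁`. Momentum conservation turns `(k₁ − k₂)·(k₃ − k₄)` into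
`(k₁ + k₃)² − (k₂ + k₃)²`, so the three transverse–transverse pairings add up to `−v₄`. Every term
of `δ′v₃` carries one factor `ξᵢ·kᵢ`, and these are exactly the transverse–longitudinal cross
terms, while the longitudinal–longitudinal pairings cancel among the three channels.
-/

namespace Stmt15

variable {V : Type*} [AddCommGroup V] [Module ℝ V]

/-- The perpendicular bracket of modes (polarization part). -/
def perpPol (B : LinearMap.BilinForm ℝ V) (p q : V × V) : V :=
  B p.1 q.1 • (p.2 - q.2) + B p.1 p.2 • q.1 - B q.1 q.2 • p.1

def v₃ (B : LinearMap.BilinForm ℝ V) (p q r : V × V) : ℝ :=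
  B q.1 r.2 * B p.1 r.1 - B p.1 r.2 * B q.1 r.1
    + B r.1 p.2 * B q.1 p.1 - B q.1 p.2 * B r.1 p.1
    + B p.1 q.2 * B r.1 q.1 - B r.1 q.2 * B p.1 q.1

def v₄ (B : LinearMap.BilinForm ℝ V) (m₁ m₂ m₃ m₄ : V × V) : ℝ :=
  B (m₁.2 + m₂.2) (m₁.2 + m₂.2)
      * (B m₁.1 m₃.1 * B m₂.1 m₄.1 - B m₂.1 m₃.1 * B m₁.1 m₄.1)
    + B (m₂.2 + m₃.2) (m₂.2 + m₃.2)
      * (B m₂.1 m₁.1 * B m₃.1 m₄.1 - B m₃.1 m₁.1 * B m₂.1 m₄.1)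
    + B (m₁.2 + m₃.2) (m₁.2 + m₃.2)
      * (B m₁.1 m₄.1 * B m₃.1 m₂.1 - B m₃.1 m₄.1 * B m₁.1 m₂.1)

def δ' (B : LinearMap.BilinForm ℝ V) (f : V × V → V × V → V × V → ℝ)
    (m₁ m₂ m₃ m₄ : V × V) : ℝ :=
  B m₁.1 m₁.2 * f m₂ m₃ m₄ - B m₂.1 m₂.2 * f m₁ m₃ m₄
    + B m₃.1 m₃.2 * f m₁ m₂ m₄ - B m₄.1 m₄.2 * f m₁ m₂ m₃

theorem apply_sub_sub_of_add_eq_zero {R M : Type*} [CommRing R] [AddCommGroup M] [Module R M]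
    {B : LinearMap.BilinForm R M} (hB : B.IsSymm) {a b c d : M} (h : a + b + c + d = 0) :
    B (a - b) (c - d) = B (a + c) (a + c) - B (b + c) (b + c) := by
  obtain rfl : d = -(a + b + c) := eq_neg_of_add_eq_zero_right h
  simp only [map_add, map_sub, map_neg, LinearMap.add_apply, LinearMap.sub_apply,
    hB.eq b a, hB.eq c a, hB.eq c b]
  ring

def perpPolTrans (B : LinearMap.BilinForm ℝ V) (p q : V × V) : V :=
  B p.1 q.1 • (p.2 - q.2)

def perpPolLong (B : LinearMap.BilinForm ℝ V) (p q : V × V) : V :=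
  B p.1 p.2 • q.1 - B q.1 q.2 • p.1

theorem perpPol_eq_trans_add_long (B : LinearMap.BilinForm ℝ V) (p q : V × V) :
    perpPol B p q = perpPolTrans B p q + perpPolLong B p q := by
  simp only [perpPol, perpPolTrans, perpPolLong, add_sub_assoc]

section Pairings

variable {B : LinearMap.BilinForm ℝ V} (m₁ m₂ m₃ m₄ : V × V)

theorem trans_pairings_eq_neg_v₄ (hB : B.IsSymm) (h : m₁.2 + m₂.2 + m₃.2 + m₄.2 = 0) :
    B (perpPolTrans B m₁ m₂) (perpPolTrans B m₃ m₄)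
      + B (perpPolTrans B m₃ m₁) (perpPolTrans B m₂ m₄)
      + B (perpPolTrans B m₁ m₄) (perpPolTrans B m₂ m₃) = -v₄ B m₁ m₂ m₃ m₄ := by
  have h₁₂ := apply_sub_sub_of_add_eq_zero hB h
  have h₃₁ := apply_sub_sub_of_add_eq_zero hB (a := m₃.2) (b := m₁.2) (c := m₂.2) (d := m₄.2)
    (by rw [← h]; abel)
  have h₂₃ := apply_sub_sub_of_add_eq_zero hB (a := m₂.2) (b := m₃.2) (c := m₁.2) (d := m₄.2)
    (by rw [← h]; abel)
  simp only [perpPolTrans, v₄, map_smul, LinearMap.smul_apply, smul_eq_mul]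
  rw [hB.eq (m₁.2 - m₄.2), h₁₂, h₃₁, h₂₃, add_comm m₃.2 m₂.2, add_comm m₂.2 m₁.2,
    add_comm m₃.2 m₁.2]
  simp only [hB.eq m₂.1 m₁.1, hB.eq m₃.1 m₁.1, hB.eq m₃.1 m₂.1]
  ring

theorem cross_pairings_eq_δ'_v₃ (hB : B.IsSymm) :
    B (perpPolTrans B m₁ m₂) (perpPolLong B m₃ m₄) + B (perpPolLong B m₁ m₂) (perpPolTrans B m₃ m₄)
      + (B (perpPolTrans B m₃ m₁) (perpPolLong B m₂ m₄)
        + B (perpPolLong B m₃ m₁) (perpPolTrans B m₂ m₄))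
      + (B (perpPolTrans B m₁ m₄) (perpPolLong B m₂ m₃)
        + B (perpPolLong B m₁ m₄) (perpPolTrans B m₂ m₃))
      = δ' B (v₃ B) m₁ m₂ m₃ m₄ := by
  have hkξ : ∀ m m' : V × V, B m.2 m'.1 = B m'.1 m.2 := fun m m' ↦ hB.eq _ _
  simp only [perpPolTrans, perpPolLong, v₃, δ', map_sub, map_smul, LinearMap.sub_apply,
    LinearMap.smul_apply, smul_eq_mul]
  simp only [hkξ, hB.eq m₂.1 m₁.1, hB.eq m₃.1 m₁.1, hB.eq m₄.1 m₁.1, hB.eq m₃.1 m₂.1,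
    hB.eq m₄.1 m₂.1, hB.eq m₄.1 m₃.1]
  ring

theorem long_pairings_eq_zero (hB : B.IsSymm) :
    B (perpPolLong B m₁ m₂) (perpPolLong B m₃ m₄)
      + B (perpPolLong B m₃ m₁) (perpPolLong B m₂ m₄)
      + B (perpPolLong B m₁ m₄) (perpPolLong B m₂ m₃) = 0 := by
  simp only [perpPolLong, map_sub, map_smul, LinearMap.sub_apply,
    LinearMap.smul_apply, smul_eq_mul]
  simp only [hB.eq m₃.1 m₂.1, hB.eq m₄.1 m₂.1, hB.eq m₄.1 m₃.1]
  ring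

end Pairings

/-- For four modes with `k₁+k₂+k₃+k₄ = 0`, the sum of the three pairings of
perpendicular brackets reproduces the quartic vertex up to exact terms:
`B([ξ₁,ξ₂]^⊥,[ξ₃,ξ₄]^⊥) + B([ξ₃,ξ₁]^⊥,[ξ₂,ξ₄]^⊥) + B([ξ₁,ξ₄]^⊥,[ξ₂,ξ₃]^⊥)
  = −v₄ + δ′v₃`. -/
theorem perp_pairings_eq_v₄ (B : LinearMap.BilinForm ℝ V) (hB : B.IsSymm)
    (ξ₁ k₁ ξ₂ k₂ ξ₃ k₃ ξ₄ k₄ : V) (h : k₁ + k₂ + k₃ + k₄ = 0) :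
    B (perpPol B (ξ₁, k₁) (ξ₂, k₂)) (perpPol B (ξ₃, k₃) (ξ₄, k₄))
      + B (perpPol B (ξ₃, k₃) (ξ₁, k₁)) (perpPol B (ξ₂, k₂) (ξ₄, k₄))
      + B (perpPol B (ξ₁, k₁) (ξ₄, k₄)) (perpPol B (ξ₂, k₂) (ξ₃, k₃))
      = -v₄ B (ξ₁, k₁) (ξ₂, k₂) (ξ₃, k₃) (ξ₄, k₄)
        + δ' B (v₃ B) (ξ₁, k₁) (ξ₂, k₂) (ξ₃, k₃) (ξ₄, k₄) := by
  simp only [perpPol_eq_trans_add_long, map_add, LinearMap.add_apply]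
  linear_combination trans_pairings_eq_neg_v₄ (ξ₁, k₁) (ξ₂, k₂) (ξ₃, k₃) (ξ₄, k₄) hB h
    + cross_pairings_eq_δ'_v₃ (ξ₁, k₁) (ξ₂, k₂) (ξ₃, k₃) (ξ₄, k₄) hB
    + long_pairings_eq_zero (ξ₁, k₁) (ξ₂, k₂) (ξ₃, k₃) (ξ₄, k₄) hB

end Stmt15
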